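/- arXiv:1212.5562 — 6 statements merged into one kernel-verified Lean document; each statement's English description precedes it below -/
import Mathlib

section
/- Let H, K₁, K₂ be finite-dimensional real inner product spaces, let Q : K₁ → K₂ be linear with Q ∘ Q* = id_{K₂}, let R : H → K₁ be linear, let b, c > 0 and set b' := bc/(b+c), and let A : H → H be self-adjoint positive definite; then A + b'·R*∘Q*∘Q∘R is positive definite, and we set G := (A + b'·R*∘Q*∘Q∘R)⁻¹. For all Φ ∈ K₂ and f ∈ H the function J(ψ, φ) := (b/2)·‖Φ − Qψ‖² + (c/2)·‖ψ − Rφ‖² + (1/2)⟪φ, Aφ⟫ − ⟪f, φ⟫ on K₁ × H has a unique global minimizer (ψ⁰, φ⁰), given by φ⁰ = G(b'·(Q∘R)*Φ + f) and ψ⁰ = Rφ⁰ − (b/(b+c))·Q*Q Rφ⁰ + (b/(b+c))·Q*Φ, and the minimum value is J(ψ⁰, φ⁰) = (b'/2)·‖Φ − QRφ⁰‖² + (1/2)⟪φ⁰, Aφ⁰⟫ − ⟪f, φ⁰⟫. -/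
/-!
Since `Q Q* = 1`, `Q* Q` is the orthogonal projection onto `(ker Q)ᗮ`, so
`‖ψ - Rφ‖² = ‖Qψ - QRφ‖² + ‖(1 - Q*Q)(ψ - Rφ)‖²`. Combining the first term with
`(b/2)‖Φ - Qψ‖²` by the parallel-sum identity
`b‖x - u‖² + c‖u - y‖² = b'‖x - y‖² + (b + c)‖u - (bx + cy)/(b + c)‖²` gives
`J(ψ, φ) = K(φ) + ((b + c)/2)‖Qψ - w(φ)‖² + (c/2)‖(1 - Q*Q)(ψ - Rφ)‖²`, where
`w(φ) = (bΦ + cQRφ)/(b + c)` and `K(φ) = (b'/2)‖Φ - QRφ‖² + (1/2)⟪φ, Aφ⟫ - ⟪f, φ⟫`. Completing the square,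
`K(φ) = K(φ⁰) + (1/2)⟪φ - φ⁰, M(φ - φ⁰)⟫` since `Mφ⁰ = b'(QR)*Φ + f`. All three remainders are
nonnegative, and they vanish exactly at `φ = φ⁰`, `ψ = Rφ⁰ + Q*(w(φ⁰) - QRφ⁰) = ψ⁰`.
-/

open RealInnerProductSpace LinearMap

section ParallelSum

variable {E : Type*} [NormedAddCommGroup E] [InnerProductSpace ℝ E]

theorem mul_norm_sub_sq_add_mul_norm_sub_sq {b c : ℝ} (hbc : b + c ≠ 0) (x u y : E) :
    b * ‖x - u‖ ^ 2 + c * ‖u - y‖ ^ 2 =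
      b * c / (b + c) * ‖x - y‖ ^ 2
        + (b + c) * ‖u - ((b / (b + c)) • x + (c / (b + c)) • y)‖ ^ 2 := by
  simp only [← real_inner_self_eq_norm_sq, inner_sub_left, inner_sub_right, inner_add_left,
    inner_add_right, real_inner_smul_left, real_inner_smul_right, real_inner_comm x u,
    real_inner_comm x y, real_inner_comm u y]
  field_simp
  ring

end ParallelSum

section CoIsometry

variable {K₁ K₂ : Type*}
  [NormedAddCommGroup K₁] [InnerProductSpace ℝ K₁] [FiniteDimensional ℝ K₁]
  [NormedAddCommGroup K₂] [InnerProductSpace ℝ K₂] [FiniteDimensional ℝ K₂]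
  {Q : K₁ →ₗ[ℝ] K₂}

theorem norm_sq_eq_norm_apply_sq_add_norm_sub_adjoint_apply_sq
    (hQ : Q ∘ₗ adjoint Q = LinearMap.id) (ψ : K₁) :
    ‖ψ‖ ^ 2 = ‖Q ψ‖ ^ 2 + ‖ψ - adjoint Q (Q ψ)‖ ^ 2 := by
  have hQQ : Q (adjoint Q (Q ψ)) = Q ψ := LinearMap.congr_fun hQ (Q ψ)
  simp only [← real_inner_self_eq_norm_sq, inner_sub_left, inner_sub_right,
    adjoint_inner_left, adjoint_inner_right, map_sub, hQQ]
  ring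

theorem weighted_norm_sq_split_of_comp_adjoint_eq_id (hQ : Q ∘ₗ adjoint Q = LinearMap.id)
    {b c : ℝ} (hbc : b + c ≠ 0) (Φ : K₂) (ψ v : K₁) :
    b / 2 * ‖Φ - Q ψ‖ ^ 2 + c / 2 * ‖ψ - v‖ ^ 2 =
      b * c / (b + c) / 2 * ‖Φ - Q v‖ ^ 2
        + (b + c) / 2 * ‖Q ψ - ((b / (b + c)) • Φ + (c / (b + c)) • Q v)‖ ^ 2
        + c / 2 * ‖(ψ - v) - adjoint Q (Q (ψ - v))‖ ^ 2 := by
  have hparallel := mul_norm_sub_sq_add_mul_norm_sub_sq hbc Φ (Q ψ) (Q v)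
  have hpythagoras := norm_sq_eq_norm_apply_sq_add_norm_sub_adjoint_apply_sq hQ (ψ - v)
  rw [← map_sub] at hparallel
  linear_combination hparallel / 2 + c / 2 * hpythagoras

theorem apply_eq_and_sub_adjoint_apply_eq_zero_iff (hQ : Q ∘ₗ adjoint Q = LinearMap.id)
    (ψ v : K₁) (u : K₂) :
    (Q ψ = u ∧ (ψ - v) - adjoint Q (Q (ψ - v)) = 0) ↔ ψ = v + adjoint Q (u - Q v) := by
  constructor
  · rintro ⟨rfl, h⟩
    rw [← map_sub]
    exact eq_add_of_sub_eq' (sub_eq_zero.mp h)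
  · have hQQ : ∀ y, Q (adjoint Q y) = y := LinearMap.congr_fun hQ
    rintro rfl
    simp [hQQ]

theorem eq_add_adjoint_sub_of_weighted_norm_sq_nonpos (hQ : Q ∘ₗ adjoint Q = LinearMap.id)
    {p q : ℝ} (hp : 0 < p) (hq : 0 < q) {ψ v : K₁} {u : K₂}
    (h : p * ‖Q ψ - u‖ ^ 2 + q * ‖(ψ - v) - adjoint Q (Q (ψ - v))‖ ^ 2 ≤ 0) :
    ψ = v + adjoint Q (u - Q v) := by
  have h₁ := sq_nonneg ‖Q ψ - u‖
  have h₂ := sq_nonneg ‖(ψ - v) - adjoint Q (Q (ψ - v))‖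
  have himage : ‖Q ψ - u‖ ^ 2 = 0 := by nlinarith
  have hkernel : ‖(ψ - v) - adjoint Q (Q (ψ - v))‖ ^ 2 = 0 := by nlinarith
  simp only [sq_eq_zero_iff, norm_eq_zero] at himage hkernel
  exact (apply_eq_and_sub_adjoint_apply_eq_zero_iff hQ ψ v u).mp
    ⟨sub_eq_zero.mp himage, hkernel⟩

end CoIsometry

section PositiveDefinite

variable {H : Type*} [NormedAddCommGroup H] [InnerProductSpace ℝ H] {M : H →ₗ[ℝ] H}

theorem eq_zero_of_inner_map_self_nonpos (hM : ∀ x, x ≠ 0 → 0 < ⟪x, M x⟫) {x : H}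
    (hx : ⟪x, M x⟫ ≤ 0) : x = 0 :=
  by_contra fun h => (hM x h).not_ge hx

theorem exists_comp_eq_id_of_inner_map_self_pos [FiniteDimensional ℝ H]
    (hM : ∀ x, x ≠ 0 → 0 < ⟪x, M x⟫) :
    ∃ G : H →ₗ[ℝ] H, M ∘ₗ G = LinearMap.id ∧ G ∘ₗ M = LinearMap.id := by
  have hinj : Function.Injective M := (injective_iff_map_eq_zero M).mpr fun x hx =>
    eq_zero_of_inner_map_self_nonpos hM (by rw [hx, inner_zero_right])
  let e := LinearEquiv.ofInjectiveEndo M hinj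
  exact ⟨e.symm, LinearMap.ext e.apply_symm_apply, LinearMap.ext e.symm_apply_apply⟩

end PositiveDefinite

section CompletingSquare

variable {H K : Type*}
  [NormedAddCommGroup H] [InnerProductSpace ℝ H] [FiniteDimensional ℝ H]
  [NormedAddCommGroup K] [InnerProductSpace ℝ K] [FiniteDimensional ℝ K]

theorem inner_add_smul_adjoint_comp_self_pos {A : H →ₗ[ℝ] H}
    (hA : ∀ x, x ≠ 0 → 0 < ⟪x, A x⟫) (T : H →ₗ[ℝ] K) {β : ℝ} (hβ : 0 ≤ β) (x : H)
    (hx : x ≠ 0) : 0 < ⟪x, (A + β • (adjoint T ∘ₗ T)) x⟫ := by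
  simp only [LinearMap.add_apply, LinearMap.smul_apply, LinearMap.comp_apply, inner_add_right,
    real_inner_smul_right, adjoint_inner_right, real_inner_self_eq_norm_sq]
  have := hA x hx
  positivity

theorem half_norm_sub_sq_add_quadratic_eq_add_inner {A : H →ₗ[ℝ] H} (hA : A.IsSymmetric)
    (T : H →ₗ[ℝ] K) (β : ℝ) (Φ : K) {f φ₀ : H}
    (hφ₀ : (A + β • (adjoint T ∘ₗ T)) φ₀ = β • adjoint T Φ + f) (φ : H) :
    β / 2 * ‖Φ - T φ‖ ^ 2 + 1 / 2 * ⟪φ, A φ⟫ - ⟪f, φ⟫ =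
      β / 2 * ‖Φ - T φ₀‖ ^ 2 + 1 / 2 * ⟪φ₀, A φ₀⟫ - ⟪f, φ₀⟫
        + 1 / 2 * ⟪φ - φ₀, (A + β • (adjoint T ∘ₗ T)) (φ - φ₀)⟫ := by
  rw [eq_sub_of_add_eq' hφ₀.symm]
  simp only [LinearMap.add_apply, LinearMap.smul_apply, LinearMap.comp_apply,
    ← real_inner_self_eq_norm_sq, inner_sub_left, inner_sub_right, inner_add_left,
    inner_add_right, real_inner_smul_left, real_inner_smul_right, adjoint_inner_left,
    adjoint_inner_right, map_sub, real_inner_comm (A φ₀) φ, hA φ₀ φ, hA φ₀ φ₀,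
    real_inner_comm (T φ₀) (T φ), real_inner_comm Φ (T φ), real_inner_comm Φ (T φ₀)]
  ring

end CompletingSquare

theorem single_step_functional_eq {H K₁ K₂ : Type*}
    [NormedAddCommGroup H] [InnerProductSpace ℝ H] [FiniteDimensional ℝ H]
    [NormedAddCommGroup K₁] [InnerProductSpace ℝ K₁] [FiniteDimensional ℝ K₁]
    [NormedAddCommGroup K₂] [InnerProductSpace ℝ K₂] [FiniteDimensional ℝ K₂]
    {Q : K₁ →ₗ[ℝ] K₂} (hQ : Q ∘ₗ adjoint Q = LinearMap.id) (R : H →ₗ[ℝ] K₁)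
    {A : H →ₗ[ℝ] H} (hA : A.IsSymmetric) {b c : ℝ} (hbc : b + c ≠ 0) (Φ : K₂) {f φ₀ : H}
    (hφ₀ : (A + (b * c / (b + c)) • (adjoint (Q ∘ₗ R) ∘ₗ (Q ∘ₗ R))) φ₀ =
      (b * c / (b + c)) • adjoint (Q ∘ₗ R) Φ + f) (ψ : K₁) (φ : H) :
    b / 2 * ‖Φ - Q ψ‖ ^ 2 + c / 2 * ‖ψ - R φ‖ ^ 2 + 1 / 2 * ⟪φ, A φ⟫ - ⟪f, φ⟫ =
      b * c / (b + c) / 2 * ‖Φ - Q (R φ₀)‖ ^ 2 + 1 / 2 * ⟪φ₀, A φ₀⟫ - ⟪f, φ₀⟫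
        + 1 / 2 * ⟪φ - φ₀, (A + (b * c / (b + c)) • (adjoint (Q ∘ₗ R) ∘ₗ (Q ∘ₗ R))) (φ - φ₀)⟫
        + (b + c) / 2 * ‖Q ψ - ((b / (b + c)) • Φ + (c / (b + c)) • Q (R φ))‖ ^ 2
        + c / 2 * ‖(ψ - R φ) - adjoint Q (Q (ψ - R φ))‖ ^ 2 := by
  have hsplit := weighted_norm_sq_split_of_comp_adjoint_eq_id hQ hbc Φ ψ (R φ)
  have hreduced := half_norm_sub_sq_add_quadratic_eq_add_inner hA (Q ∘ₗ R) _ Φ hφ₀ φ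
  simp only [LinearMap.comp_apply] at hreduced
  linarith

/-- Abstract single-step minimization (Lemma 2.3 of the paper): for a
co-isometry `Q` (i.e. `Q ∘ Q* = id`), a linear map `R`, constants `b, c > 0` with
`b' = bc/(b+c)`, and a self-adjoint positive definite `A`, the operator
`M = A + b'·R*∘Q*∘Q∘R` is positive definite (hence invertible, with inverse `G`), and the
functional `J(ψ, φ) = (b/2)‖Φ − Qψ‖² + (c/2)‖ψ − Rφ‖² + (1/2)⟪φ, Aφ⟫ − ⟪f, φ⟫` has the
unique global minimizer `(ψ⁰, φ⁰)` with `φ⁰ = G(b'·(QR)*Φ + f)`,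
`ψ⁰ = Rφ⁰ − (b/(b+c))Q*QRφ⁰ + (b/(b+c))Q*Φ`, and minimum value
`(b'/2)‖Φ − QRφ⁰‖² + (1/2)⟪φ⁰, Aφ⁰⟫ − ⟪f, φ⁰⟫`. -/
theorem single_step_minimization
    {H K₁ K₂ : Type*}
    [NormedAddCommGroup H] [InnerProductSpace ℝ H] [FiniteDimensional ℝ H]
    [NormedAddCommGroup K₁] [InnerProductSpace ℝ K₁] [FiniteDimensional ℝ K₁]
    [NormedAddCommGroup K₂] [InnerProductSpace ℝ K₂] [FiniteDimensional ℝ K₂]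
    (Q : K₁ →ₗ[ℝ] K₂) (hQ : Q ∘ₗ LinearMap.adjoint Q = LinearMap.id)
    (R : H →ₗ[ℝ] K₁)
    (b c : ℝ) (hb : 0 < b) (hc : 0 < c)
    (A : H →ₗ[ℝ] H)
    (hA_symm : ∀ x y : H, ⟪A x, y⟫ = ⟪x, A y⟫)
    (hA_pos : ∀ x : H, x ≠ 0 → 0 < ⟪x, A x⟫) :
    let b' : ℝ := b * c / (b + c)
    let M : H →ₗ[ℝ] H :=
      A + b' • (LinearMap.adjoint R ∘ₗ LinearMap.adjoint Q ∘ₗ Q ∘ₗ R)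
    (∀ x : H, x ≠ 0 → 0 < ⟪x, M x⟫) ∧
    (∃ G : H →ₗ[ℝ] H, M ∘ₗ G = LinearMap.id ∧ G ∘ₗ M = LinearMap.id) ∧
    ∀ G : H →ₗ[ℝ] H, M ∘ₗ G = LinearMap.id → G ∘ₗ M = LinearMap.id →
      ∀ (Φ : K₂) (f : H),
        let J : K₁ → H → ℝ := fun ψ φ =>
          b / 2 * ‖Φ - Q ψ‖ ^ 2 + c / 2 * ‖ψ - R φ‖ ^ 2
            + 1 / 2 * ⟪φ, A φ⟫ - ⟪f, φ⟫
        let φ0 : H := G (b' • LinearMap.adjoint (Q ∘ₗ R) Φ + f)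
        let ψ0 : K₁ := R φ0 - (b / (b + c)) • LinearMap.adjoint Q (Q (R φ0))
            + (b / (b + c)) • LinearMap.adjoint Q Φ
        (∀ (ψ : K₁) (φ : H), (ψ, φ) ≠ (ψ0, φ0) → J ψ0 φ0 < J ψ φ) ∧
          J ψ0 φ0 = b' / 2 * ‖Φ - Q (R φ0)‖ ^ 2 + 1 / 2 * ⟪φ0, A φ0⟫ - ⟪f, φ0⟫ := by
  intro b' M
  have hM : M = A + b' • (adjoint (Q ∘ₗ R) ∘ₗ (Q ∘ₗ R)) := by
    rw [LinearMap.adjoint_comp]; rfl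
  clear_value M
  subst hM
  have hbc : b + c ≠ 0 := by positivity
  have hM_pos := inner_add_smul_adjoint_comp_self_pos hA_pos (Q ∘ₗ R) (β := b') (by positivity)
  refine ⟨hM_pos, exists_comp_eq_id_of_inner_map_self_pos hM_pos, fun G hMG _ Φ f => ?_⟩
  intro J φ0 ψ0
  have hJ := single_step_functional_eq hQ R hA_symm hbc Φ (φ₀ := φ0) (LinearMap.congr_fun hMG _)
  have hψ0 :
      ψ0 = R φ0 + adjoint Q ((b / (b + c)) • Φ + (c / (b + c)) • Q (R φ0) - Q (R φ0)) := by
    simp only [ψ0, map_sub, map_add, map_smul]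
    match_scalars <;> field_simp
    ring
  obtain ⟨hQψ0, hker⟩ := (apply_eq_and_sub_adjoint_apply_eq_zero_iff hQ _ _ _).mpr hψ0
  have hmin : J ψ0 φ0 =
      b * c / (b + c) / 2 * ‖Φ - Q (R φ0)‖ ^ 2 + 1 / 2 * ⟪φ0, A φ0⟫ - ⟪f, φ0⟫ := by
    rw [show J ψ0 φ0 = _ from hJ ψ0 φ0, hQψ0, hker]; simp
  refine ⟨fun ψ φ hne => lt_of_not_ge fun hle => hne ?_, hmin⟩
  rw [hmin, show J ψ φ = _ from hJ ψ φ] at hle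
  obtain rfl : φ = φ0 := sub_eq_zero.mp <| eq_zero_of_inner_map_self_nonpos hM_pos <| by
    nlinarith [sq_nonneg ‖Q ψ - ((b / (b + c)) • Φ + (c / (b + c)) • Q (R φ))‖,
      sq_nonneg ‖(ψ - R φ) - adjoint Q (Q (ψ - R φ))‖]
  rw [sub_self, map_zero, inner_zero_right] at hle
  rw [(eq_add_adjoint_sub_of_weighted_norm_sq_nonpos (ψ := ψ) (p := (b + c) / 2) (q := c / 2) hQ
    (by positivity) (by positivity) (by linarith)).trans hψ0.symm]
end

section
/- Fix integers d ≥ 1 and N ≥ 1 and set ε := 1/N. Index fine-lattice sites by x ∈ ℤ^d (representing the point εx) and coarse points by y ∈ N·ℤ^d, with block B(y) := {x ∈ ℤ^d : y_μ ≤ x_μ < y_μ + N for all μ} and block average (Qφ)(y) := N^{−d} Σ_{x ∈ B(y)} φ(x); let (Δφ)(x) := ε^{−2} Σ_{μ=1}^d (φ(x+e_μ) + φ(x−e_μ) − 2φ(x)). Let Λ ⊆ ℤ^d be a finite union of blocks, let c > 0 and μ̄ ≥ 0, and for a coarse field Φ : N·ℤ^d → ℝ and a fine field φ : ℤ^d →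 ℝ define S*(Λ; Φ, φ) := (c/2) Σ_{y : B(y) ⊆ Λ} (Φ(y) − (Qφ)(y))² + (1/2)⟨∂φ, ∂φ⟩_{*,Λ} + (μ̄/2) Σ_{x∈Λ} ε^d φ(x)², where ⟨∂f, ∂g⟩_{*,Λ} := Σ ε^{d−2}(f(x′)−f(x))(g(x′)−g(x)) over unordered nearest-neighbour pairs {x,x′} ⊆ Λ plus (1/2)·Σ ε^{d−2}(f(x′)−f(x))(g(x′)−g(x)) over nearest-neighbour pairs with x ∈ Λ, x′ ∉ Λ. Suppose φ satisfies the field equation (−Δφ)(x) + μ̄·φ(x) = c·(Φ(y(x)) − (Qφ)(y(x))) for every x ∈ Λ, where y(x) is the coarse point with x ∈ B(y(x)). Then for every coarse field Z : N·ℤ^d → ℝ and every fine field 𝒵 : ℤ^d → ℝ, S*(Λ; Φ + Z, φ + 𝒵) = S*(Λ; Φ, φ) + S*(Λ; Z, 𝒵) + c·Σ_{y : B(y) ⊆ Λ} Z(y)(Φ(y) − (Qφ)(y)) + 𝖻_Λ(∂φ, 𝒵), where 𝖻_Λ(∂φ, 𝒵) := (1/2) Σ_{x∈Λ, x′∉Λ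 nearest neighbours} ε^{d−2}(φ(x′) − φ(x))(𝒵(x) + 𝒵(x′)). -/
open Finset

/-- Fine lattice sites, representing the points `εx`, `x ∈ ℤ^d`. -/
abbrev Site (d : ℕ) := Fin d → ℤ

/-- The lattice spacing `ε = 1/N`. -/
noncomputable def eps (N : ℕ) : ℝ := 1 / N

/-- The standard unit lattice vector in direction `μ`. -/
def unitVec (d : ℕ) (μ : Fin d) : Site d := fun ν => if ν = μ then 1 else 0

/-- The block `B(y)` of fine sites belonging to the coarse point `y = N·z`:
`{x : N z_μ ≤ x_μ < N z_μ + N}`. -/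
noncomputable def block (d N : ℕ) (z : Site d) : Finset (Site d) :=
  Fintype.piFinset fun μ => Finset.Ico ((N : ℤ) * z μ) ((N : ℤ) * z μ + (N : ℤ))

/-- The block average `(Qφ)(y) = N^{-d} Σ_{x ∈ B(y)} φ(x)` at the coarse point `y = N·z`. -/
noncomputable def Qavg (d N : ℕ) (φ : Site d → ℝ) (z : Site d) : ℝ :=
  ((N : ℝ) ^ d)⁻¹ * ∑ x ∈ block d N z, φ x

/-- The lattice Laplacian `(Δφ)(x) = ε^{-2} Σ_μ (φ(x+e_μ) + φ(x−e_μ) − 2φ(x))`. -/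
noncomputable def lap (d N : ℕ) (φ : Site d → ℝ) (x : Site d) : ℝ :=
  eps N ^ (-2 : ℤ) *
    ∑ μ : Fin d, (φ (x + unitVec d μ) + φ (x - unitVec d μ) - 2 * φ x)

/-- `⟨∂f, ∂g⟩_{*,Λ}`: the sum of `ε^{d−2}(f(x′)−f(x))(g(x′)−g(x))` over unordered
nearest-neighbour pairs `{x,x′} ⊆ Λ`, plus one half of the same sum over nearest-neighbour
pairs with `x ∈ Λ`, `x′ ∉ Λ`. -/
noncomputable def gradForm (d N : ℕ) (Λ : Finset (Site d)) (f g : Site d → ℝ) : ℝ :=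
  (∑ x ∈ Λ, ∑ μ : Fin d,
      if x + unitVec d μ ∈ Λ then
        eps N ^ ((d : ℤ) - 2) * (f (x + unitVec d μ) - f x) * (g (x + unitVec d μ) - g x)
      else 0)
    + 1 / 2 *
      ∑ x ∈ Λ, ∑ μ : Fin d,
        ((if x + unitVec d μ ∉ Λ then
            eps N ^ ((d : ℤ) - 2) * (f (x + unitVec d μ) - f x) * (g (x + unitVec d μ) - g x)
          else 0)
          +
          (if x - unitVec d μ ∉ Λ then
            eps N ^ ((d : ℤ) - 2) * (f (x - unitVec d μ) - f x) * (g (x - unitVec d μ) - g x)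
          else 0))

/-- The action
`S*(Λ; Φ, φ) = (c/2)Σ_{y: B(y) ⊆ Λ}(Φ(y) − Qφ(y))² + (1/2)⟨∂φ,∂φ⟩_{*,Λ} + (μ̄/2)Σ_{x∈Λ} ε^d φ(x)²`,
for `Λ` the union of the blocks with coarse labels in `Λc`. -/
noncomputable def Sstar (d N : ℕ) (c mubar : ℝ) (Λc : Finset (Site d))
    (Φ φ : Site d → ℝ) : ℝ :=
  c / 2 * ∑ z ∈ Λc, (Φ z - Qavg d N φ z) ^ 2
    + 1 / 2 * gradForm d N (Λc.biUnion (block d N)) φ φ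
    + mubar / 2 * ∑ x ∈ Λc.biUnion (block d N), eps N ^ d * φ x ^ 2

/-- The boundary term
`𝖻_Λ(∂φ, 𝒵) = (1/2) Σ_{x∈Λ, x′∉Λ nn} ε^{d−2}(φ(x′) − φ(x))(𝒵(x) + 𝒵(x′))`. -/
noncomputable def bdryTerm (d N : ℕ) (Λ : Finset (Site d)) (φ Z : Site d → ℝ) : ℝ :=
  1 / 2 *
    ∑ x ∈ Λ, ∑ μ : Fin d,
      ((if x + unitVec d μ ∉ Λ then
          eps N ^ ((d : ℤ) - 2) * (φ (x + unitVec d μ) - φ x) * (Z x + Z (x + unitVec d μ))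
        else 0)
        +
        (if x - unitVec d μ ∉ Λ then
          eps N ^ ((d : ℤ) - 2) * (φ (x - unitVec d μ) - φ x) * (Z x + Z (x - unitVec d μ))
        else 0))

/-!
Polarizing the three quadratic pieces of `S*` leaves the cross term
`c Σ_y (Φ − Qφ)(Z − Q𝒵) + ⟨∂φ, ∂𝒵⟩_{*,Λ} + μ̄ Σ_x ε^d φ 𝒵`. Summation by parts (Green's first
identity, one lattice direction at a time) rewrites `⟨∂φ, ∂𝒵⟩_{*,Λ}` as `Σ_x ε^d (−Δφ) 𝒵 + 𝖻_Λ(∂φ, 𝒵)`: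
the interior bonds produce the Laplacian and a full boundary flux `Σ (φ(x′) − φ(x)) 𝒵(x)`, which
together with the half-weighted boundary bonds of `⟨·,·⟩_*` is exactly `𝖻_Λ`. As `ε^d = N^{−d}`, the
field equation then turns `Σ_x ε^d (−Δφ + μ̄φ) 𝒵` into `c Σ_y (Φ − Qφ) Q𝒵`, which cancels the `Q𝒵`
part of the coarse cross term.
-/

theorem Finset.sum_ite_add_mem_eq_sum_ite_sub_mem {α M : Type*} [AddCommGroup α] [DecidableEq α]
    [AddCommMonoid M] (s : Finset α) (e : α) (G : α → α → M) :
    (∑ x ∈ s, if x + e ∈ s then G x (x + e) else 0)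
      = ∑ x ∈ s, if x - e ∈ s then G (x - e) x else 0 := by
  rw [← sum_filter, ← sum_filter]
  refine sum_nbij' (· + e) (· - e) ?_ ?_ ?_ ?_ ?_ <;> intro x hx <;>
    simp_all only [mem_filter, add_sub_cancel_right, sub_add_cancel, and_self]

section Green

variable {α : Type*} [AddCommGroup α] [DecidableEq α] (Λ : Finset α) (e : α) (φ Z : α → ℝ)

theorem green_first_identity :
    (∑ x ∈ Λ, if x + e ∈ Λ then (φ (x + e) - φ x) * (Z (x + e) - Z x) else 0)
      = ∑ x ∈ Λ, ((if x + e ∉ Λ then (φ (x + e) - φ x) * Z x else 0)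
          + (if x - e ∉ Λ then (φ (x - e) - φ x) * Z x else 0)
          - ((φ (x + e) - φ x) + (φ (x - e) - φ x)) * Z x) := by
  have hshift := sum_ite_add_mem_eq_sum_ite_sub_mem Λ e fun x y => (φ y - φ x) * Z y
  beta_reduce at hshift
  calc _ = (∑ x ∈ Λ, if x + e ∈ Λ then (φ (x + e) - φ x) * Z (x + e) else 0)
        - ∑ x ∈ Λ, if x + e ∈ Λ then (φ (x + e) - φ x) * Z x else 0 := by
        rw [← sum_sub_distrib]
        exact sum_congr rfl fun x _ => by split_ifs <;> ring
    _ = _ := by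
        rw [hshift, ← sum_sub_distrib]
        exact sum_congr rfl fun x _ => by split_ifs <;> ring

end Green

section Lattice

variable {d N : ℕ}

theorem eps_ne_zero (hN : N ≠ 0) : eps N ≠ 0 := by
  simpa [eps] using hN

theorem eps_pow_mul_lap (hN : N ≠ 0) (φ : Site d → ℝ) (x : Site d) :
    eps N ^ d * lap d N φ x
      = ∑ μ : Fin d, eps N ^ ((d : ℤ) - 2)
          * ((φ (x + unitVec d μ) - φ x) + (φ (x - unitVec d μ) - φ x)) := by
  rw [lap, ← mul_assoc, ← zpow_natCast, ← zpow_add₀ (eps_ne_zero hN), ← sub_eq_add_neg,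
    mul_sum]
  exact sum_congr rfl fun μ _ => by ring

theorem gradForm_eq_sum_neg_lap_add_bdryTerm (hN : N ≠ 0) (Λ : Finset (Site d))
    (φ Z : Site d → ℝ) :
    gradForm d N Λ φ Z = ∑ x ∈ Λ, eps N ^ d * (-lap d N φ x) * Z x + bdryTerm d N Λ φ Z := by
  set w := eps N ^ ((d : ℤ) - 2)
  have hlap (x : Site d) : eps N ^ d * (-lap d N φ x) * Z x
      = ∑ μ : Fin d, -(w * ((φ (x + unitVec d μ) - φ x) + (φ (x - unitVec d μ) - φ x)) * Z x) := by
    rw [mul_neg, eps_pow_mul_lap hN, neg_mul, sum_mul, ← sum_neg_distrib]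
  rw [← sub_eq_zero]
  simp only [gradForm, bdryTerm, hlap, mul_sum, ← sum_add_distrib, ← sum_sub_distrib]
  rw [sum_comm]
  refine sum_eq_zero fun μ _ => ?_
  calc _ = w * ((∑ x ∈ Λ, if x + unitVec d μ ∈ Λ then
            (φ (x + unitVec d μ) - φ x) * (Z (x + unitVec d μ) - Z x) else 0)
        - ∑ x ∈ Λ, ((if x + unitVec d μ ∉ Λ then (φ (x + unitVec d μ) - φ x) * Z x else 0)
          + (if x - unitVec d μ ∉ Λ then (φ (x - unitVec d μ) - φ x) * Z x else 0)
          - ((φ (x + unitVec d μ) - φ x) + (φ (x - unitVec d μ) - φ x)) * Z x)) := by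
        rw [← sum_sub_distrib, mul_sum]
        exact sum_congr rfl fun x _ => by split_ifs <;> ring
    _ = 0 := by rw [green_first_identity, sub_self, mul_zero]

theorem gradForm_add_add (Λ : Finset (Site d)) (f g : Site d → ℝ) :
    gradForm d N Λ (f + g) (f + g)
      = gradForm d N Λ f f + gradForm d N Λ g g + 2 * gradForm d N Λ f g := by
  simp only [gradForm, Pi.add_apply, mul_add, mul_sum, ← sum_add_distrib]
  exact sum_congr rfl fun x _ => sum_congr rfl fun μ _ => by split_ifs <;> ring

theorem Qavg_add (φ ψ : Site d → ℝ) (z : Site d) :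
    Qavg d N (φ + ψ) z = Qavg d N φ z + Qavg d N ψ z := by
  simp only [Qavg, Pi.add_apply, sum_add_distrib, mul_add]

open Function in
theorem pairwise_disjoint_block : Pairwise (Disjoint on block d N) := by
  intro z₁ z₂ hne
  refine disjoint_left.mpr fun x h₁ h₂ => hne (funext fun μ => ?_)
  simp only [block, Fintype.mem_piFinset, mem_Ico] at h₁ h₂
  have hle {a b : ℤ} (ha : N * a ≤ x μ) (hb : x μ < N * b + N) : a ≤ b :=
    Int.lt_add_one_iff.mp <| lt_of_mul_lt_mul_left (by linarith) (Int.natCast_nonneg N)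
  exact le_antisymm (hle (h₁ μ).1 (h₂ μ).2) (hle (h₂ μ).1 (h₁ μ).2)

theorem sum_biUnion_block_eq_sum_mul_Qavg (Λc : Finset (Site d)) (F a Z : Site d → ℝ)
    (hF : ∀ z ∈ Λc, ∀ x ∈ block d N z, F x = a z) :
    ∑ x ∈ Λc.biUnion (block d N), eps N ^ d * F x * Z x = ∑ z ∈ Λc, a z * Qavg d N Z z := by
  rw [sum_biUnion (pairwise_disjoint_block.set_pairwise _)]
  refine sum_congr rfl fun z hz => ?_
  rw [Qavg, eps, div_pow, one_pow, one_div, mul_sum, mul_sum]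
  exact sum_congr rfl fun x hx => by rw [hF z hz x hx]; ring

theorem Sstar_add (c mubar : ℝ) (Λc : Finset (Site d)) (Φ φ Z 𝒵 : Site d → ℝ) :
    Sstar d N c mubar Λc (Φ + Z) (φ + 𝒵)
      = Sstar d N c mubar Λc Φ φ + Sstar d N c mubar Λc Z 𝒵
        + (c * ∑ z ∈ Λc, (Φ z - Qavg d N φ z) * (Z z - Qavg d N 𝒵 z)
          + gradForm d N (Λc.biUnion (block d N)) φ 𝒵
          + mubar * ∑ x ∈ Λc.biUnion (block d N), eps N ^ d * φ x * 𝒵 x) := by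
  have hcoarse : ∑ z ∈ Λc, ((Φ + Z) z - Qavg d N (φ + 𝒵) z) ^ 2
      = ∑ z ∈ Λc, (Φ z - Qavg d N φ z) ^ 2 + ∑ z ∈ Λc, (Z z - Qavg d N 𝒵 z) ^ 2
        + 2 * ∑ z ∈ Λc, (Φ z - Qavg d N φ z) * (Z z - Qavg d N 𝒵 z) := by
    simp only [Pi.add_apply, Qavg_add, mul_sum, ← sum_add_distrib]
    exact sum_congr rfl fun _ _ => by ring
  have hmass : ∑ x ∈ Λc.biUnion (block d N), eps N ^ d * (φ + 𝒵) x ^ 2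
      = ∑ x ∈ Λc.biUnion (block d N), eps N ^ d * φ x ^ 2
        + ∑ x ∈ Λc.biUnion (block d N), eps N ^ d * 𝒵 x ^ 2
        + 2 * ∑ x ∈ Λc.biUnion (block d N), eps N ^ d * φ x * 𝒵 x := by
    simp only [Pi.add_apply, mul_sum, ← sum_add_distrib]
    exact sum_congr rfl fun _ _ => by ring
  rw [Sstar, Sstar, Sstar, hcoarse, gradForm_add_add, hmass]
  ring

end Lattice

theorem quadratic_expansion_around_background_general
    (d N : ℕ) (hN : 1 ≤ N)
    (c mubar : ℝ)
    (Λc : Finset (Site d)) (Φ φ : Site d → ℝ)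
    (hfield : ∀ z ∈ Λc, ∀ x ∈ block d N z,
      -lap d N φ x + mubar * φ x = c * (Φ z - Qavg d N φ z))
    (Zc Zf : Site d → ℝ) :
    Sstar d N c mubar Λc (Φ + Zc) (φ + Zf)
      = Sstar d N c mubar Λc Φ φ + Sstar d N c mubar Λc Zc Zf
        + c * ∑ z ∈ Λc, Zc z * (Φ z - Qavg d N φ z)
        + bdryTerm d N (Λc.biUnion (block d N)) φ Zf := by
  set Λ := Λc.biUnion (block d N)
  have hweak : ∑ x ∈ Λ, eps N ^ d * (-lap d N φ x) * Zf x
      + mubar * ∑ x ∈ Λ, eps N ^ d * φ x * Zf x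
      = c * ∑ z ∈ Λc, (Φ z - Qavg d N φ z) * Qavg d N Zf z := by
    calc _ = ∑ x ∈ Λ, eps N ^ d * (-lap d N φ x + mubar * φ x) * Zf x := by
          rw [mul_sum, ← sum_add_distrib]
          exact sum_congr rfl fun _ _ => by ring
      _ = ∑ z ∈ Λc, c * (Φ z - Qavg d N φ z) * Qavg d N Zf z :=
          sum_biUnion_block_eq_sum_mul_Qavg Λc _ _ Zf hfield
      _ = _ := by
          rw [mul_sum]
          exact sum_congr rfl fun _ _ => by ring
  have hcross : ∑ z ∈ Λc, (Φ z - Qavg d N φ z) * (Zc z - Qavg d N Zf z)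
      = ∑ z ∈ Λc, Zc z * (Φ z - Qavg d N φ z)
        - ∑ z ∈ Λc, (Φ z - Qavg d N φ z) * Qavg d N Zf z := by
    rw [← sum_sub_distrib]
    exact sum_congr rfl fun _ _ => by ring
  rw [Sstar_add, gradForm_eq_sum_neg_lap_add_bdryTerm (Nat.one_le_iff_ne_zero.mp hN), hcross]
  linear_combination hweak

/-- Expansion of the action around a background field satisfying the field
equation `−Δφ + μ̄φ = c(Φ − Qφ)` on `Λ`: for all fluctuation fields `Zc` (coarse) and
`Zf` (fine),
`S*(Λ; Φ+Zc, φ+Zf) = S*(Λ; Φ, φ) + S*(Λ; Zc, Zf) + c Σ_y Zc(y)(Φ(y) − Qφ(y)) + 𝖻_Λ(∂φ, Zf)`. -/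
theorem quadratic_expansion_around_background
    (d N : ℕ) (hd : 1 ≤ d) (hN : 1 ≤ N)
    (c mubar : ℝ) (hc : 0 < c) (hmu : 0 ≤ mubar)
    (Λc : Finset (Site d)) (Φ φ : Site d → ℝ)
    (hfield : ∀ z ∈ Λc, ∀ x ∈ block d N z,
      -lap d N φ x + mubar * φ x = c * (Φ z - Qavg d N φ z))
    (Zc Zf : Site d → ℝ) :
    Sstar d N c mubar Λc (Φ + Zc) (φ + Zf)
      = Sstar d N c mubar Λc Φ φ + Sstar d N c mubar Λc Zc Zf
        + c * ∑ z ∈ Λc, Zc z * (Φ z - Qavg d N φ z)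
        + bdryTerm d N (Λc.biUnion (block d N)) φ Zf :=
  quadratic_expansion_around_background_general d N hN c mubar Λc Φ φ hfield Zc Zf
end

section
/- Let H, K, K′ be finite-dimensional real inner product spaces, let R : H → K and Q : K → K′ be linear maps with Q ∘ Q* = id_{K′}, let a > 0, b ≥ 0, r ≥ 0 be reals, and let A : H → H be self-adjoint positive definite. Define G := (A + a·R*R)⁻¹ and Δ := a·id_K − a²·R∘G∘R* on K; define A_r := (a+r)⁻¹·(id_K − Q*Q) + (a+b+r)⁻¹·Q*Q and B_r := r(a+r)⁻¹·(id_K − Q*Q) + (b+r)(a+b+r)⁻¹·Q*Q on K, and G_r := (A + a·R*∘B_r∘R)⁻¹ (which exists since A is positive definite and B_r is positive semidefinite). Then the operator Δ + b·Q*Q + r·id_K is invertible and (Δ + b·Q*Q + r·id_K)⁻¹ = A_r + a²·A_r ∘ R ∘ G_r ∘ R* ∘ A_r. -/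
open RealInnerProductSpace

theorem resolvent_aux {H K : Type*} [AddCommGroup H] [Module ℝ H]
    [AddCommGroup K] [Module ℝ K]
    (M Mr G Gr : H →ₗ[ℝ] H) (R : H →ₗ[ℝ] K) (Rt : K →ₗ[ℝ] H) (Ar D : K →ₗ[ℝ] K) (c : ℝ)
    (hMG : M ∘ₗ G = LinearMap.id) (hGM : G ∘ₗ M = LinearMap.id)
    (hMrGr : Mr ∘ₗ Gr = LinearMap.id) (hGrMr : Gr ∘ₗ Mr = LinearMap.id)
    (hDAr : D ∘ₗ Ar = LinearMap.id) (hArD : Ar ∘ₗ D = LinearMap.id)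
    (hkey : c • (Rt ∘ₗ Ar ∘ₗ R) = M - Mr) :
    (D - c • (R ∘ₗ G ∘ₗ Rt)) ∘ₗ (Ar + c • (Ar ∘ₗ R ∘ₗ Gr ∘ₗ Rt ∘ₗ Ar)) = LinearMap.id ∧
    (Ar + c • (Ar ∘ₗ R ∘ₗ Gr ∘ₗ Rt ∘ₗ Ar)) ∘ₗ (D - c • (R ∘ₗ G ∘ₗ Rt)) = LinearMap.id := by
  have hMG' : ∀ y, M (G y) = y := fun y => by simpa using DFunLike.congr_fun hMG y
  have hGM' : ∀ y, G (M y) = y := fun y => by simpa using DFunLike.congr_fun hGM y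
  have hMrGr' : ∀ y, Mr (Gr y) = y := fun y => by simpa using DFunLike.congr_fun hMrGr y
  have hGrMr' : ∀ y, Gr (Mr y) = y := fun y => by simpa using DFunLike.congr_fun hGrMr y
  have hDAr' : ∀ y, D (Ar y) = y := fun y => by simpa using DFunLike.congr_fun hDAr y
  have hArD' : ∀ y, Ar (D y) = y := fun y => by simpa using DFunLike.congr_fun hArD y
  have hkey' : ∀ y, c • Rt (Ar (R y)) = M y - Mr y := fun y => by
    simpa using DFunLike.congr_fun hkey y
  constructor
  · ext x
    simp only [LinearMap.comp_apply, LinearMap.add_apply, LinearMap.sub_apply,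
      LinearMap.smul_apply, LinearMap.id_apply, LinearMap.id_coe, id_eq,
      map_add, map_smul, map_sub]
    set w := Rt (Ar x) with hw
    set z := Gr w with hz
    have h5 : c • R (G (Rt (Ar (R z)))) = R z - R (G w) := by
      rw [← map_smul R, ← map_smul G, hkey', map_sub, hGM', hz, hMrGr', map_sub]
    rw [hDAr', hDAr', h5]
    module
  · ext x
    simp only [LinearMap.comp_apply, LinearMap.add_apply, LinearMap.sub_apply,
      LinearMap.smul_apply, LinearMap.id_apply, LinearMap.id_coe, id_eq,
      map_add, map_smul, map_sub]
    set u := Rt x with hu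
    have h5 : c • Ar (R (Gr (Rt (Ar (R (G u)))))) = Ar (R (Gr u)) - Ar (R (G u)) := by
      rw [← map_smul Ar, ← map_smul R, ← map_smul Gr, hkey', map_sub, hMG', hGrMr',
        map_sub, map_sub]
    rw [hArD', ← hu, h5]
    module

/-- Resolvent identity for the fluctuation covariance (Appendix C of the
paper): with `G = (A + a·R*R)⁻¹`, `Δ = a·id − a²·R∘G∘R*`,
`A_r = (a+r)⁻¹(id − Q*Q) + (a+b+r)⁻¹Q*Q`, `B_r = r(a+r)⁻¹(id − Q*Q) + (b+r)(a+b+r)⁻¹Q*Q`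
and `G_r = (A + a·R*∘B_r∘R)⁻¹` (which exists), the operator `Δ + b·Q*Q + r·id` is invertible
with inverse `A_r + a²·A_r∘R∘G_r∘R*∘A_r`. -/
theorem covariance_resolvent_identity
    {H K K' : Type*}
    [NormedAddCommGroup H] [InnerProductSpace ℝ H] [FiniteDimensional ℝ H]
    [NormedAddCommGroup K] [InnerProductSpace ℝ K] [FiniteDimensional ℝ K]
    [NormedAddCommGroup K'] [InnerProductSpace ℝ K'] [FiniteDimensional ℝ K']
    (R : H →ₗ[ℝ] K) (Q : K →ₗ[ℝ] K')
    (hQ : Q ∘ₗ LinearMap.adjoint Q = LinearMap.id)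
    (a b r : ℝ) (ha : 0 < a) (hb : 0 ≤ b) (hr : 0 ≤ r)
    (A : H →ₗ[ℝ] H)
    (hA_symm : ∀ x y : H, ⟪A x, y⟫ = ⟪x, A y⟫)
    (hA_pos : ∀ x : H, x ≠ 0 → 0 < ⟪x, A x⟫)
    (G : H →ₗ[ℝ] H)
    (hG₁ : (A + a • (LinearMap.adjoint R ∘ₗ R)) ∘ₗ G = LinearMap.id)
    (hG₂ : G ∘ₗ (A + a • (LinearMap.adjoint R ∘ₗ R)) = LinearMap.id) :
    let P : K →ₗ[ℝ] K := LinearMap.adjoint Q ∘ₗ Q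
    let Δop : K →ₗ[ℝ] K := a • LinearMap.id - a ^ 2 • (R ∘ₗ G ∘ₗ LinearMap.adjoint R)
    let Ar : K →ₗ[ℝ] K := (a + r)⁻¹ • (LinearMap.id - P) + (a + b + r)⁻¹ • P
    let Br : K →ₗ[ℝ] K :=
      (r / (a + r)) • (LinearMap.id - P) + ((b + r) / (a + b + r)) • P
    let Nop : K →ₗ[ℝ] K := Δop + b • P + r • LinearMap.id
    (∃ Gr : H →ₗ[ℝ] H,
      (A + a • (LinearMap.adjoint R ∘ₗ Br ∘ₗ R)) ∘ₗ Gr = LinearMap.id ∧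
      Gr ∘ₗ (A + a • (LinearMap.adjoint R ∘ₗ Br ∘ₗ R)) = LinearMap.id) ∧
    ∀ Gr : H →ₗ[ℝ] H,
      (A + a • (LinearMap.adjoint R ∘ₗ Br ∘ₗ R)) ∘ₗ Gr = LinearMap.id →
      Gr ∘ₗ (A + a • (LinearMap.adjoint R ∘ₗ Br ∘ₗ R)) = LinearMap.id →
        Nop ∘ₗ (Ar + a ^ 2 • (Ar ∘ₗ R ∘ₗ Gr ∘ₗ LinearMap.adjoint R ∘ₗ Ar)) = LinearMap.id ∧
        (Ar + a ^ 2 • (Ar ∘ₗ R ∘ₗ Gr ∘ₗ LinearMap.adjoint R ∘ₗ Ar)) ∘ₗ Nop = LinearMap.id := by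
  intro P Δop Ar Br Nop
  have hPdef : P = LinearMap.adjoint Q ∘ₗ Q := rfl
  have hΔdef : Δop = a • LinearMap.id - a ^ 2 • (R ∘ₗ G ∘ₗ LinearMap.adjoint R) := rfl
  have hArdef : Ar = (a + r)⁻¹ • (LinearMap.id - P) + (a + b + r)⁻¹ • P := rfl
  have hBrdef : Br = (r / (a + r)) • (LinearMap.id - P) + ((b + r) / (a + b + r)) • P := rfl
  have hNdef : Nop = Δop + b • P + r • LinearMap.id := rfl
  have har : (0 : ℝ) < a + r := by linarith
  have habr : (0 : ℝ) < a + b + r := by linarith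
  have hQ' : ∀ z, Q (LinearMap.adjoint Q z) = z := fun z => by
    simpa using DFunLike.congr_fun hQ z
  have hPP : ∀ y, P (P y) = P y := fun y => by
    rw [hPdef]; simp [hQ']
  -- positivity facts
  have hPy : ∀ y : K, ⟪y, P y⟫ = ⟪Q y, Q y⟫ := fun y => by
    rw [hPdef]; simp [LinearMap.adjoint_inner_right]
  have hPy2 : ∀ y : K, 0 ≤ ⟪y, y - P y⟫ := by
    intro y
    have key : ⟪y, y - P y⟫ = ⟪y - P y, y - P y⟫ := by
      simp only [inner_sub_left, inner_sub_right, hPdef, LinearMap.comp_apply,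
        map_sub, LinearMap.adjoint_inner_left, LinearMap.adjoint_inner_right, hQ']
      ring
    rw [key]
    exact real_inner_self_nonneg
  have hBr_nonneg : ∀ y : K, 0 ≤ ⟪y, Br y⟫ := by
    intro y
    rw [hBrdef]
    simp only [LinearMap.add_apply, LinearMap.smul_apply, LinearMap.sub_apply,
      LinearMap.id_apply, inner_add_right, real_inner_smul_right]
    have h1 : 0 ≤ ⟪y, P y⟫ := by rw [hPy]; exact real_inner_self_nonneg
    have h2 := hPy2 y
    have c1 : (0:ℝ) ≤ r / (a + r) := div_nonneg hr har.le
    have c2 : (0:ℝ) ≤ (b + r) / (a + b + r) := div_nonneg (by linarith) habr.le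
    nlinarith [mul_nonneg c1 h2, mul_nonneg c2 h1]
  -- the operator Mr = A + a • R* Br R is positive definite, hence bijective
  set Mr : H →ₗ[ℝ] H := A + a • (LinearMap.adjoint R ∘ₗ Br ∘ₗ R) with hMrdef
  have hMr_pos : ∀ x : H, x ≠ 0 → 0 < ⟪x, Mr x⟫ := by
    intro x hx
    rw [hMrdef]
    simp only [LinearMap.add_apply, LinearMap.smul_apply, LinearMap.comp_apply,
      inner_add_right, real_inner_smul_right, LinearMap.adjoint_inner_right]
    have := hA_pos x hx
    have := mul_nonneg ha.le (hBr_nonneg (R x))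
    linarith
  have hMr_inj : Function.Injective Mr := by
    rw [← LinearMap.ker_eq_bot, LinearMap.ker_eq_bot']
    intro x hx
    by_contra hne
    have h := hMr_pos x hne
    rw [hx, inner_zero_right] at h
    exact lt_irrefl 0 h
  have hMr_surj : Function.Surjective Mr :=
    (LinearMap.injective_iff_surjective).mp hMr_inj
  let e : H ≃ₗ[ℝ] H := LinearEquiv.ofBijective Mr ⟨hMr_inj, hMr_surj⟩
  have hGr_ex : Mr ∘ₗ (e.symm : H →ₗ[ℝ] H) = LinearMap.id ∧
      (e.symm : H →ₗ[ℝ] H) ∘ₗ Mr = LinearMap.id := by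
    constructor
    · ext x; exact e.apply_symm_apply x
    · ext x; exact e.symm_apply_apply x
  constructor
  · exact ⟨(e.symm : H →ₗ[ℝ] H), hGr_ex.1, hGr_ex.2⟩
  · intro Gr hGr1 hGr2
    -- set up the abstract algebra
    set Dop : K →ₗ[ℝ] K := (a + r) • LinearMap.id + b • P with hDdef
    have hD1 : Dop ∘ₗ Ar = LinearMap.id := by
      ext x
      simp only [hDdef, hArdef, LinearMap.comp_apply, LinearMap.add_apply,
        LinearMap.smul_apply, LinearMap.sub_apply, LinearMap.id_apply,
        map_add, map_smul, map_sub, hPP]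
      match_scalars <;> field_simp <;> ring
    have hD2 : Ar ∘ₗ Dop = LinearMap.id := by
      ext x
      simp only [hDdef, hArdef, LinearMap.comp_apply, LinearMap.add_apply,
        LinearMap.smul_apply, LinearMap.sub_apply, LinearMap.id_apply,
        map_add, map_smul, map_sub, hPP]
      match_scalars <;> field_simp <;> ring
    have hkey : (a ^ 2) • (LinearMap.adjoint R ∘ₗ Ar ∘ₗ R) =
        (A + a • (LinearMap.adjoint R ∘ₗ R)) - Mr := by
      ext x
      simp only [hMrdef, hArdef, hBrdef, LinearMap.comp_apply, LinearMap.add_apply,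
        LinearMap.smul_apply, LinearMap.sub_apply, LinearMap.id_apply,
        map_add, map_smul, map_sub]
      match_scalars <;> field_simp <;> ring
    have hN : Nop = Dop - a ^ 2 • (R ∘ₗ G ∘ₗ LinearMap.adjoint R) := by
      rw [hNdef, hΔdef, hDdef]
      module
    obtain ⟨h1, h2⟩ := resolvent_aux (A + a • (LinearMap.adjoint R ∘ₗ R)) Mr G Gr R
      (LinearMap.adjoint R) Ar Dop (a ^ 2) hG₁ hG₂ hGr1 hGr2 hD1 hD2 hkey
    rw [hN]
    exact ⟨h1, h2⟩
end

section
/- Let G be a simple graph on a vertex type V and let D be a natural number with D ≥ 1 such that every vertex of G has a finite set of neighbours with at most D elements. A finite set S of vertices is called connected if the subgraph of G induced on S is connected, and |S| denotes its cardinality. Then for every vertex v and every natural number n ≥ 1, the collection of connected finite vertex sets S with v ∈ S and |S| = n is finite and has at most D^{2n} elements. -/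
/-!
A connected set `S ∋ v` of `n` vertices is the vertex set of a closed walk at `v` of length
`2 (n - 1)`: remove a vertex `x` whose removal keeps `S` connected, take such a walk for
`S \ {x}` based at a neighbour `y` of `x`, prepend the detour `y → x → y`, and rotate the closed
walk to start at `v`. So the connected sets are images of closed walks of length `2 (n - 1)`
at `v`, and a degree bound `D` allows at most `D ^ (2 (n - 1))` of those.
-/

open Finset

namespace SimpleGraph

variable {V : Type*}

theorem card_finsetWalkLength_le (G : SimpleGraph V) [DecidableEq V] [G.LocallyFinite] {D : ℕ}
    (hD : ∀ u, G.degree u ≤ D) (k : ℕ) (u v : V) :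
    (G.finsetWalkLength k u v).card ≤ D ^ k := by
  induction k generalizing u with
  | zero =>
    rw [finsetWalkLength]
    split_ifs with h
    · subst h; simp
    · simp
  | succ k ih =>
    rw [finsetWalkLength]
    calc _ ≤ ∑ w : G.neighborSet u, (G.finsetWalkLength k w v).card :=
          card_biUnion_le.trans_eq (by simp only [card_map])
      _ ≤ ∑ _w : G.neighborSet u, D ^ k := sum_le_sum fun w _ => ih w
      _ = G.degree u * D ^ k := by
          rw [sum_const, card_univ, card_neighborSet_eq_degree, smul_eq_mul]
      _ ≤ D ^ (k + 1) := by
          rw [pow_succ']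
          exact Nat.mul_le_mul_right _ (hD u)

variable {G : SimpleGraph V} [DecidableEq V]

theorem exists_connected_induce_erase {S : Finset V} (hS : (G.induce (S : Set V)).Connected)
    (hnt : S.Nontrivial) : ∃ x ∈ S, (G.induce (S.erase x : Set V)).Connected := by
  have : Nontrivial (S : Set V) := Set.nontrivial_coe_sort.mpr hnt
  obtain ⟨x, hx⟩ := hS.exists_connected_induce_compl_singleton_of_finite_nontrivial
  let f : (G.induce (S : Set V)).induce {x}ᶜ ↪g G :=
    (Embedding.induce (S : Set V)).comp (Embedding.induce {x}ᶜ)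
  have hrange : Set.range f = (S.erase x : Set V) := by
    ext y
    constructor
    · rintro ⟨⟨⟨y, hyS⟩, hyx⟩, rfl⟩
      exact mem_erase.mpr ⟨fun h => hyx (Subtype.ext h), hyS⟩
    · intro hy
      obtain ⟨hyx, hyS⟩ := mem_erase.mp hy
      exact ⟨⟨⟨y, hyS⟩, fun h => hyx (congrArg Subtype.val h)⟩, rfl⟩
  refine ⟨x, x.2, ?_⟩
  rw [← hrange]
  exact f.isoInduceRange.connected_iff.mp hx

theorem exists_closed_walk_length_eq_support_toFinset_eq {S : Finset V}
    (hS : (G.induce (S : Set V)).Connected) {v : V} (hv : v ∈ S) :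
    ∃ w : G.Walk v v, w.length = 2 * (S.card - 1) ∧ w.support.toFinset = S := by
  induction S using Finset.strongInduction generalizing v with
  | H S ih =>
  obtain rfl | hnt := S.eq_singleton_or_nontrivial hv
  · exact ⟨.nil, by simp, by simp⟩
  obtain ⟨x, hxS, hconn⟩ := exists_connected_induce_erase hS hnt
  have : Nontrivial (S : Set V) := Set.nontrivial_coe_sort.mpr hnt
  obtain ⟨⟨y, hyS⟩, hxy⟩ := hS.preconnected.exists_adj_of_nontrivial ⟨x, hxS⟩
  replace hxy : G.Adj x y := hxy
  have hy : y ∈ S.erase x := mem_erase.mpr ⟨hxy.ne.symm, hyS⟩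
  obtain ⟨w, hlen, hsupp⟩ := ih _ (erase_ssubset hxS) hconn hy
  let c : G.Walk y y := .cons hxy.symm (.cons hxy w)
  have hc (u : V) : u ∈ c.support ↔ u ∈ S := by
    have hw : u ∈ w.support ↔ u ∈ S.erase x := by rw [← List.mem_toFinset, hsupp]
    simp only [c, Walk.support_cons, List.mem_cons, hw, mem_erase]
    grind
  refine ⟨c.rotate v ((hc v).mpr hv), ?_, ?_⟩
  · have := card_erase_of_mem hxS
    have := one_lt_card_iff_nontrivial.mpr hnt
    simp only [Walk.length_rotate, c, Walk.length_cons, hlen]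
    omega
  · ext u
    rw [List.mem_toFinset, Walk.mem_support_rotate_iff, hc]

end SimpleGraph

theorem count_connected_sets_general
    {V : Type*} (G : SimpleGraph V) (D : ℕ) (hD : 1 ≤ D)
    (hdeg : ∀ v : V, (G.neighborSet v).Finite ∧ (G.neighborSet v).ncard ≤ D)
    (v : V) (n : ℕ) :
    {S : Finset V | v ∈ S ∧ S.card = n ∧ (G.induce (S : Set V)).Connected}.Finite ∧
    {S : Finset V | v ∈ S ∧ S.card = n ∧ (G.induce (S : Set V)).Connected}.ncard
      ≤ D ^ (2 * n) := by
  classical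
  let _ : G.LocallyFinite := fun u => (hdeg u).1.fintype
  have hdegree (u : V) : G.degree u ≤ D := by
    rw [← G.card_neighborSet_eq_degree, ← Nat.card_eq_fintype_card, Nat.card_coe_set_eq]
    exact (hdeg u).2
  let walks := G.finsetWalkLength (2 * (n - 1)) v v
  have hcover : {S : Finset V | v ∈ S ∧ S.card = n ∧ (G.induce (S : Set V)).Connected} ⊆
      (fun w : G.Walk v v => w.support.toFinset) '' walks := by
    rintro S ⟨hv, rfl, hS⟩
    obtain ⟨w, hlen, hsupp⟩ := SimpleGraph.exists_closed_walk_length_eq_support_toFinset_eq hS hv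
    exact ⟨w, SimpleGraph.mem_finsetWalkLength_iff.mpr hlen, hsupp⟩
  have hfin := walks.finite_toSet.image fun w : G.Walk v v => w.support.toFinset
  refine ⟨hfin.subset hcover, ?_⟩
  calc _ ≤ _ := Set.ncard_le_ncard hcover hfin
    _ ≤ (walks : Set (G.Walk v v)).ncard := Set.ncard_image_le walks.finite_toSet
    _ = walks.card := Set.ncard_coe_finset walks
    _ ≤ D ^ (2 * (n - 1)) := G.card_finsetWalkLength_le hdegree _ v v
    _ ≤ D ^ (2 * n) := Nat.pow_le_pow_right hD (by omega)

/-- Counting connected vertex sets: in a graph in which every vertex has at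
most `D ≥ 1` neighbours, the number of connected finite vertex sets `S` with `v ∈ S` and
`|S| = n` (for `n ≥ 1`) is finite and at most `D^(2n)`. -/
theorem count_connected_sets
    {V : Type*} (G : SimpleGraph V) (D : ℕ) (hD : 1 ≤ D)
    (hdeg : ∀ v : V, (G.neighborSet v).Finite ∧ (G.neighborSet v).ncard ≤ D)
    (v : V) (n : ℕ) (hn : 1 ≤ n) :
    {S : Finset V | v ∈ S ∧ S.card = n ∧ (G.induce (S : Set V)).Connected}.Finite ∧
    {S : Finset V | v ∈ S ∧ S.card = n ∧ (G.induce (S : Set V)).Connected}.ncard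
      ≤ D ^ (2 * n) :=
  count_connected_sets_general G D hD hdeg v n
end

section
/- Equip ℝ^d, for a fixed integer d ≥ 1, with the sup norm ‖x‖∞ = max over coordinates μ of |x_μ|, and for m ∈ ℤ^d let C_m := m + [0,1]^d ⊆ ℝ^d denote the closed unit cube with lower corner m. For a finite vertex set I, a tree on I is a simple graph on I that is connected and acyclic. Let n ≥ 1, let x : Fin n → ℝ^d, and suppose there is an injective map m : Fin n → ℤ^d with x_i ∈ C_{m_i} for every i (so the points lie in pairwise distinct closed unit lattice cubes). If τ is a tree on Fin n and ℓ := Σ_{{i,j} an edge of τ} ‖x_i − x_j‖∞, then n ≤ 4·(2^d + 1)·(ℓ + 1). -/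
/-!
Doubling every edge of the tree gives a walk through all the points of sup-length at most `2ℓ`
(by induction on the number of vertices: delete a vertex `v` that leaves the graph connected,
and splice the detour `u → v → u` to a neighbour `u` into a walk through the remaining ones).
Cutting this walk each time the distance travelled passes an integer splits the points into at
most `2ℓ + 1` groups of pairwise distance `< 1`. Points in distinct unit lattice cubes at
distance `< 1` have labels differing by at most one in each coordinate, hence distinct parity
vectors in `(ZMod 2)^d`, so each group has at most `2^d` points: `n ≤ 2^d (2ℓ + 1)`.
-/

/-- The total length of the edges of a graph `τ` on a vertex type `V`, whose vertices are
placed in a (pseudo)metric space via `p : V → M`. -/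
noncomputable def treeEdgeSum {V M : Type*} [PseudoMetricSpace M]
    (τ : SimpleGraph V) (p : V → M) : ℝ :=
  ∑' e : τ.edgeSet,
    Sym2.lift ⟨fun u v => dist (p u) (p v), fun u v => dist_comm (p u) (p v)⟩ (e : Sym2 V)

open Finset

section ChainLength

variable {V W X : Type*} [PseudoMetricSpace X]

def chainLength (p : V → X) : List V → ℝ
  | a :: b :: t => dist (p a) (p b) + chainLength p (b :: t)
  | _ => 0

lemma chainLength_map (p : V → X) (f : W → V) :
    ∀ L : List W, chainLength p (L.map f) = chainLength (p ∘ f) L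
  | a :: b :: t => by
    simp only [List.map_cons, chainLength, ← chainLength_map p f (b :: t), Function.comp_apply]
  | [] | [_] => rfl

lemma chainLength_append_detour (p : V → X) (A B : List V) (a b : V) :
    chainLength p (A ++ a :: b :: a :: B) =
      chainLength p (A ++ a :: B) + 2 * dist (p a) (p b) := by
  induction A with
  | nil => cases B <;> simp [chainLength, dist_comm (p b)] <;> ring
  | cons c A ih =>
    cases A with
    | nil => cases B <;> simp [chainLength, dist_comm (p b)] <;> ring
    | cons e A => simp only [List.cons_append, chainLength] at ih ⊢; rw [ih]; ring

lemma chainLength_eq_sum_getD (p : V → X) (d : V) :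
    ∀ L : List V, chainLength p L =
      ∑ i ∈ range (L.length - 1), dist (p (L.getD i d)) (p (L.getD (i + 1) d))
  | a :: b :: t => by
    rw [chainLength, chainLength_eq_sum_getD p d (b :: t)]
    simp [sum_range_succ' _ (t.length), add_comm]
  | [] | [_] => by simp [chainLength]

end ChainLength

section EdgeLength

variable {V W X : Type*} [PseudoMetricSpace X]

def edgeLength (p : V → X) : Sym2 V → ℝ :=
  Sym2.lift ⟨fun u v => dist (p u) (p v), fun u v => dist_comm (p u) (p v)⟩

lemma edgeLength_nonneg (p : V → X) (e : Sym2 V) : 0 ≤ edgeLength p e := by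
  induction e using Sym2.ind with
  | _ u v => exact dist_nonneg

lemma edgeLength_map (p : V → X) (f : W → V) (e : Sym2 W) :
    edgeLength p (e.map f) = edgeLength (p ∘ f) e := by
  induction e using Sym2.ind with
  | _ u v => rfl

lemma treeEdgeSum_nonneg (G : SimpleGraph V) (p : V → X) : 0 ≤ treeEdgeSum G p :=
  tsum_nonneg fun e => edgeLength_nonneg p e

open SimpleGraph in
lemma treeEdgeSum_induce_compl_singleton_add_le [Finite V] {G : SimpleGraph V} {u v : V}
    (huv : G.Adj u v) (p : V → X) :
    treeEdgeSum (G.induce {v}ᶜ) (p ∘ (↑)) + dist (p u) (p v) ≤ treeEdgeSum G p := by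
  classical
  have := Fintype.ofFinite V
  let uv : G.edgeSet := ⟨s(u, v), huv⟩
  have huv_notMem : uv ∉ Set.range (Embedding.induce {v}ᶜ).mapEdgeSet := by
    rintro ⟨e, he⟩
    have hv : v ∈ ((Embedding.induce {v}ᶜ).mapEdgeSet e : Sym2 V) := by
      rw [he]
      exact Sym2.mem_mk_right u v
    obtain ⟨w, -, hw⟩ := Sym2.mem_map.1 hv
    exact w.2 hw
  let ι := (Embedding.induce (G := G) {v}ᶜ).mapEdgeSet.optionElim uv huv_notMem
  calc treeEdgeSum (G.induce {v}ᶜ) (p ∘ (↑)) + dist (p u) (p v)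
      = ∑' o, edgeLength p (ι o) := by
        rw [tsum_fintype, Fintype.sum_option, add_comm, treeEdgeSum, tsum_fintype]
        congr 1
        exact sum_congr rfl fun e _ => (edgeLength_map p Subtype.val e.1).symm
    _ ≤ treeEdgeSum G p :=
        tsum_comp_le_tsum_of_inj (f := fun e : G.edgeSet => edgeLength p e) Summable.of_finite
          (fun e => edgeLength_nonneg p e) ι.injective

end EdgeLength

theorem SimpleGraph.Connected.exists_chainLength_le {V X : Type*} [Finite V]
    [PseudoMetricSpace X] {G : SimpleGraph V} (hG : G.Connected) (p : V → X) :
    ∃ L : List V, (∀ v, v ∈ L) ∧ chainLength p L ≤ 2 * treeEdgeSum G p := by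
  induction V using Finite.induction_subsingleton_or_nontrivial with
  | hbase V =>
    obtain ⟨v⟩ := hG.nonempty
    exact ⟨[v], fun w => by simp [Subsingleton.elim w v],
      by simpa [chainLength] using treeEdgeSum_nonneg G p⟩
  | hstep V ih =>
    obtain ⟨v, hv⟩ := hG.exists_connected_induce_compl_singleton_of_finite_nontrivial
    obtain ⟨u, hvu⟩ := hG.preconnected.exists_adj_of_nontrivial v
    obtain ⟨L, hL, hlen⟩ := ih _ (Finite.card_subtype_lt (x := v) (by simp)) hv (p ∘ (↑))
    obtain ⟨A, B, rfl⟩ := List.append_of_mem (hL ⟨u, hvu.ne'⟩)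
    refine ⟨A.map (↑) ++ u :: v :: u :: B.map (↑), fun w => ?_, ?_⟩
    · by_cases hw : w = v
      · simp [hw]
      · have := List.mem_map_of_mem (f := Subtype.val) (hL ⟨w, hw⟩)
        simp only [List.map_append, List.map_cons, List.mem_append, List.mem_cons] at this ⊢
        tauto
    · have hsplice := chainLength_map p Subtype.val (A ++ ⟨u, hvu.ne'⟩ :: B)
      simp only [List.map_append, List.map_cons] at hsplice
      rw [chainLength_append_detour, hsplice]
      linarith [treeEdgeSum_induce_compl_singleton_add_le hvu.symm p]

section Pigeonhole

variable {V X : Type*} [Fintype V] [PseudoMetricSpace X]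

lemma card_le_mul_of_sum_dist_le (p : V → X) {K : ℕ}
    (hK : ∀ s : Finset V, (∀ i ∈ s, ∀ j ∈ s, dist (p i) (p j) < 1) → #s ≤ K)
    (y : ℕ → V) {N : ℕ} (hy : ∀ v, ∃ k ≤ N, y k = v) {c : ℝ}
    (hc : ∑ i ∈ range N, dist (p (y i)) (p (y (i + 1))) ≤ c) :
    (Fintype.card V : ℝ) ≤ K * (c + 1) := by
  choose k hkN hk using hy
  set S : ℕ → ℝ := fun j => ∑ i ∈ range j, dist (p (y i)) (p (y (i + 1)))
  have hS_mono : Monotone S := fun i j hij =>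
    sum_le_sum_of_subset_of_nonneg (range_mono hij) fun _ _ _ => dist_nonneg
  have hS_nonneg : ∀ j, 0 ≤ S j := fun j => sum_nonneg fun _ _ => dist_nonneg
  have hc_nonneg : 0 ≤ c := (hS_nonneg N).trans hc
  have hclose : ∀ v w, k v ≤ k w → ⌊S (k v)⌋₊ = ⌊S (k w)⌋₊ →
      dist (p v) (p w) < 1 := by
    intro v w hvw hfloor
    calc dist (p v) (p w) = dist (p (y (k v))) (p (y (k w))) := by rw [hk, hk]
      _ ≤ S (k w) - S (k v) := by
        rw [← sum_Ico_eq_sub _ hvw]; exact dist_le_Ico_sum_dist (p ∘ y) hvw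
      _ < 1 := by
        have := Nat.lt_floor_add_one (S (k w))
        have := Nat.floor_le (hS_nonneg (k v))
        rw [hfloor] at *
        linarith
  have hcard : Fintype.card V ≤ K * #(range (⌊c⌋₊ + 1)) := by
    refine card_le_mul_card_image_of_maps_to (f := fun v => ⌊S (k v)⌋₊) ?_ K ?_
    · intro v _
      exact mem_range.2 (Nat.lt_succ_of_le (Nat.floor_le_floor ((hS_mono (hkN v)).trans hc)))
    · intro b _
      refine hK _ fun v hv w hw => ?_
      have hfloor : ⌊S (k v)⌋₊ = ⌊S (k w)⌋₊ := by
        rw [(mem_filter.1 hv).2, (mem_filter.1 hw).2]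
      rcases le_total (k v) (k w) with hvw | hwv
      · exact hclose v w hvw hfloor
      · exact dist_comm (p v) (p w) ▸ hclose w v hwv hfloor.symm
  calc (Fintype.card V : ℝ) ≤ K * (⌊c⌋₊ + 1 : ℕ) := by
        rw [card_range] at hcard; exact_mod_cast hcard
    _ ≤ K * (c + 1) := by
        push_cast
        gcongr
        exact Nat.floor_le hc_nonneg

lemma card_le_mul_of_chainLength_le (p : V → X) {K : ℕ}
    (hK : ∀ s : Finset V, (∀ i ∈ s, ∀ j ∈ s, dist (p i) (p j) < 1) → #s ≤ K)
    {L : List V} (hL : ∀ v, v ∈ L) {c : ℝ} (hc : chainLength p L ≤ c) :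
    (Fintype.card V : ℝ) ≤ K * (c + 1) := by
  cases L with
  | nil =>
    have : IsEmpty V := ⟨fun v => List.not_mem_nil (hL v)⟩
    have hc_nonneg : 0 ≤ c := hc
    simp only [Fintype.card_of_isEmpty, CharP.cast_eq_zero]
    positivity
  | cons a t =>
    rw [chainLength_eq_sum_getD p a] at hc
    refine card_le_mul_of_sum_dist_le p hK (fun i => (a :: t).getD i a) (fun v => ?_) hc
    obtain ⟨i, hi, rfl⟩ := List.mem_iff_getElem.1 (hL v)
    exact ⟨i, by simp at hi ⊢; omega, List.getD_eq_getElem _ _ hi⟩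

end Pigeonhole

lemma Int.abs_sub_le_one_of_mem_Icc {m n : ℤ} {a b : ℝ} (ha : a ∈ Set.Icc (m : ℝ) (m + 1))
    (hb : b ∈ Set.Icc (n : ℝ) (n + 1)) (hab : |a - b| < 1) : |m - n| ≤ 1 := by
  have hmn : |((m - n : ℤ) : ℝ)| < 2 := by
    push_cast
    rw [abs_lt] at hab ⊢
    constructor <;> linarith [ha.1, ha.2, hb.1, hb.2]
  have : |m - n| < 2 := by exact_mod_cast hmn
  omega

lemma card_le_two_pow_of_dist_lt_one {ι : Type*} {d : ℕ} (x : ι → Fin d → ℝ)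
    (m : ι → Fin d → ℤ) (hm : Function.Injective m)
    (hx : ∀ i μ, x i μ ∈ Set.Icc (m i μ : ℝ) (m i μ + 1))
    (s : Finset ι) (hs : ∀ i ∈ s, ∀ j ∈ s, dist (x i) (x j) < 1) : #s ≤ 2 ^ d := by
  have hinj : Set.InjOn (fun i μ => (m i μ : ZMod 2)) s := by
    intro i hi j hj hij
    refine hm (funext fun μ => ?_)
    have hclose : |m i μ - m j μ| ≤ 1 := Int.abs_sub_le_one_of_mem_Icc (hx i μ) (hx j μ)
      (by simpa [Real.dist_eq] using (dist_le_pi_dist (x i) (x j) μ).trans_lt (hs i hi j hj))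
    have hpar : (2 : ℤ) ∣ m j μ - m i μ :=
      (ZMod.intCast_eq_intCast_iff_dvd_sub _ _ 2).1 (congrFun hij μ)
    rw [abs_le] at hclose
    omega
  simpa using card_le_card_of_injOn _ (fun i _ => mem_univ _) hinj

theorem cube_count_from_tree_length_general
    (d : ℕ) (n : ℕ)
    (x : Fin n → (Fin d → ℝ)) (m : Fin n → (Fin d → ℤ))
    (hm : Function.Injective m)
    (hx : ∀ i : Fin n, ∀ μ : Fin d, ((m i μ : ℝ) ≤ x i μ ∧ x i μ ≤ (m i μ : ℝ) + 1))
    (τ : SimpleGraph (Fin n)) (hτ : τ.IsTree)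
    (ℓ : ℝ) (hℓ : treeEdgeSum τ x = ℓ) :
    (n : ℝ) ≤ 4 * ((2 : ℝ) ^ d + 1) * (ℓ + 1) := by
  obtain ⟨L, hL, hlen⟩ := hτ.connected.exists_chainLength_le x
  have hcount : (n : ℝ) ≤ 2 ^ d * (2 * ℓ + 1) := by
    simpa using card_le_mul_of_chainLength_le x (card_le_two_pow_of_dist_lt_one x m hm hx) hL
      (hℓ ▸ hlen)
  have hℓ_nonneg : 0 ≤ ℓ := hℓ ▸ treeEdgeSum_nonneg τ x
  nlinarith [pow_pos (two_pos (α := ℝ)) d]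

/-- Counting cubes joined by a tree (part (3) of Lemma E.1 of the paper):
in `ℝ^d` with the sup norm, if `n ≥ 1` points lie in pairwise distinct closed unit lattice
cubes and are joined by a tree of total sup-length `ℓ`, then `n ≤ 4(2^d + 1)(ℓ + 1)`. -/
theorem cube_count_from_tree_length
    (d : ℕ) (hd : 1 ≤ d) (n : ℕ) (hn : 1 ≤ n)
    (x : Fin n → (Fin d → ℝ)) (m : Fin n → (Fin d → ℤ))
    (hm : Function.Injective m)
    (hx : ∀ i : Fin n, ∀ μ : Fin d, ((m i μ : ℝ) ≤ x i μ ∧ x i μ ≤ (m i μ : ℝ) + 1))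
    (τ : SimpleGraph (Fin n)) (hτ : τ.IsTree)
    (ℓ : ℝ) (hℓ : treeEdgeSum τ x = ℓ) :
    (n : ℝ) ≤ 4 * ((2 : ℝ) ^ d + 1) * (ℓ + 1) :=
  cube_count_from_tree_length_general d n x m hm hx τ hτ ℓ hℓ
end

section
/- Equip ℤ^d (d ≥ 1 a fixed integer) with the sup metric dist(x,y) = max over coordinates μ of |x_μ − y_μ|. For a nonempty finite set Y ⊆ ℤ^d let mst(Y) denote the minimum, over all trees τ on Y (simple graphs on Y that are connected and acyclic), of Σ_{{u,v} an edge of τ} dist(u,v). Then there exist real constants a > 0 and b > 0, depending only on d, such that the family (exp(−a·mst(Y)))_Y, indexed by all finite subsets Y of ℤ^d with 0 ∈ Y, is summable and Σ_Y exp(−a·mst(Y)) ≤ b. -/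
/-- `mst(Y)`: the minimum, over all trees `τ` on the finite set `Y ⊆ ℤ^d` (with the sup
distance), of the total edge length of `τ`. -/
noncomputable def mstLen (d : ℕ) (Y : Finset (Fin d → ℤ)) : ℝ :=
  sInf {ℓ : ℝ | ∃ τ : SimpleGraph {m : Fin d → ℤ // m ∈ Y}, τ.IsTree ∧
    treeEdgeSum τ (fun m => (m : Fin d → ℤ)) = ℓ}

open SimpleGraph Real
open scoped ENNReal

lemma List.count_map_le_of_injective {α β : Type*} [DecidableEq α] [DecidableEq β]
    {g : α → β} (hg : Function.Injective g) {l : List α} {k : ℕ}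
    (hl : ∀ a, l.count a ≤ k) (b : β) : (l.map g).count b ≤ k := by
  by_cases hb : ∃ a, g a = b
  · obtain ⟨a, rfl⟩ := hb
    rw [List.count_map_of_injective _ _ hg]
    exact hl a
  · rw [List.count_eq_zero.mpr fun hmem => hb (by grind)]
    exact Nat.zero_le k

lemma SimpleGraph.Connected.exists_walk_forall_mem_support_count_edges_le_two {V : Type*}
    [Finite V] [DecidableEq V] {G : SimpleGraph V} (hG : G.Connected) (r : V) :
    ∃ w : G.Walk r r, (∀ v, v ∈ w.support) ∧ ∀ e, w.edges.count e ≤ 2 := by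
  induction hn : Nat.card V using Nat.strong_induction_on generalizing V with
  | _ n ih =>
  rcases subsingleton_or_nontrivial V with hV | hV
  · exact ⟨.nil, fun v => by simp [Subsingleton.elim v r], by simp⟩
  obtain ⟨v, hv⟩ := hG.exists_connected_induce_compl_singleton_of_finite_nontrivial
  obtain ⟨u, hvu⟩ := hG.preconnected.exists_adj_of_nontrivial v
  obtain ⟨w', hw'_supp, hw'_count⟩ :=
    ih _ (hn ▸ Finite.card_subtype_lt (x := v) (by simp)) hv ⟨u, hvu.ne.symm⟩ rfl
  let w₁ : G.Walk u u := w'.map (Embedding.induce ({v}ᶜ : Set V)).toHom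
  have hw₁_supp : w₁.support = w'.support.map Subtype.val := Walk.support_map _ _
  have hw₁_edges : w₁.edges = w'.edges.map (Sym2.map Subtype.val) := Walk.edges_map _ _
  have hv_w₁ : v ∉ w₁.support := by simp [hw₁_supp]
  -- the detour `u → v → u` attaches `v` to a spanning closed walk of `G - v`
  let w₂ : G.Walk u u := .cons hvu.symm (.cons hvu w₁)
  have hw₂_supp : ∀ x, x ∈ w₂.support := by
    intro x
    by_cases hx : x = v
    · simp [w₂, hx]
    · simp [w₂, hw₁_supp, hx, hw'_supp]
  have hw₂_count : ∀ e, w₂.edges.count e ≤ 2 := by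
    intro e
    have hw₁ : w₁.edges.count e ≤ 2 := hw₁_edges ▸
      List.count_map_le_of_injective (Sym2.map.injective Subtype.val_injective) hw'_count e
    by_cases he : e = s(u, v)
    · have : w₁.edges.count e = 0 :=
        List.count_eq_zero.mpr fun h => hv_w₁ (w₁.snd_mem_support_of_mem_edges (he ▸ h))
      simp only [w₂, Walk.edges_cons, List.count_cons, this]
      grind
    · have he' : s(v, u) ≠ e := fun h => he (h ▸ Sym2.eq_swap)
      simp [w₂, Ne.symm he, he', hw₁]
  exact ⟨w₂.rotate r (hw₂_supp r), fun x => (w₂.mem_support_rotate_iff _ _).mpr (hw₂_supp x),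
    fun e => ((w₂.rotate_edges r _).perm.count_eq e).trans_le (hw₂_count e)⟩

section EdgeDist

variable {V X : Type*} [PseudoMetricSpace X] (p : V → X)

def edgeDist : Sym2 V → ℝ :=
  Sym2.lift ⟨fun u v => dist (p u) (p v), fun u v => dist_comm (p u) (p v)⟩

lemma edgeDist_nonneg (e : Sym2 V) : 0 ≤ edgeDist p e := by
  induction e using Sym2.ind with
  | _ u v => exact dist_nonneg

lemma treeEdgeSum_eq_sum_edgeFinset (G : SimpleGraph V) [Fintype G.edgeSet] :
    treeEdgeSum G p = ∑ e ∈ G.edgeFinset, edgeDist p e := by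
  rw [treeEdgeSum, tsum_fintype, edgeFinset, ← Finset.sum_set_coe]
  rfl

lemma SimpleGraph.Walk.sum_edgeDist_le_two_mul_treeEdgeSum [Finite V] [DecidableEq V]
    {G : SimpleGraph V} {u v : V} (w : G.Walk u v) (hw : ∀ e, w.edges.count e ≤ 2) :
    (w.edges.map (edgeDist p)).sum ≤ 2 * treeEdgeSum G p := by
  have := Fintype.ofFinite V
  classical
  rw [treeEdgeSum_eq_sum_edgeFinset, Finset.sum_list_map_count, Finset.mul_sum]
  calc ∑ e ∈ w.edges.toFinset, w.edges.count e • edgeDist p e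
      ≤ ∑ e ∈ w.edges.toFinset, 2 * edgeDist p e := by
        gcongr with e
        rw [nsmul_eq_mul]
        exact mul_le_mul_of_nonneg_right (mod_cast hw e) (edgeDist_nonneg p e)
    _ ≤ ∑ e ∈ G.edgeFinset, 2 * edgeDist p e := by
        refine Finset.sum_le_sum_of_subset_of_nonneg (fun e he => ?_)
          fun e _ _ => mul_nonneg zero_le_two (edgeDist_nonneg p e)
        exact G.mem_edgeFinset.mpr (w.edges_subset_edgeSet (List.mem_toFinset.mp he))

end EdgeDist

namespace SimpleGraph.Walk

variable {V X : Type*} {G : SimpleGraph V} (p : V → X)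

def displacements [Sub X] {u v : V} (w : G.Walk u v) : List X :=
  w.darts.map fun d => p d.snd - p d.fst

lemma scanl_add_displacements [AddCommGroup X] {u v : V} (w : G.Walk u v) :
    (w.displacements p).scanl (· + ·) (p u) = w.support.map p := by
  induction w with
  | nil => rfl
  | cons h w ih => simp [displacements, ← ih]

lemma displacements_ne_zero [AddGroup X] {p : V → X} (hp : Function.Injective p) {u v : V}
    (w : G.Walk u v) : ∀ z ∈ w.displacements p, z ≠ 0 := by
  simp only [displacements, List.mem_map, forall_exists_index, and_imp, forall_apply_eq_imp_iff₂]
  exact fun d _ => sub_ne_zero.mpr fun h => d.adj.ne (hp h).symm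

lemma sum_norm_displacements [SeminormedAddCommGroup X] {u v : V} (w : G.Walk u v) :
    ((w.displacements p).map (‖·‖)).sum = (w.edges.map (edgeDist p)).sum := by
  simp only [displacements, edges, List.map_map]
  exact congrArg List.sum (List.map_congr_left fun d _ => (dist_eq_norm' _ _).symm)

end SimpleGraph.Walk

namespace ENNReal

variable {α : Type*} (w : α → ℝ≥0∞)

lemma tsum_fin_pi_prod : ∀ n : ℕ, ∑' f : Fin n → α, ∏ i, w (f i) = (∑' a, w a) ^ n
  | 0 => by simp
  | n + 1 => by
    rw [← (Fin.consEquiv fun _ => α).tsum_eq, ENNReal.tsum_prod', pow_succ',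
      ← tsum_fin_pi_prod n, ← ENNReal.tsum_mul_right]
    refine tsum_congr fun a => ?_
    rw [← ENNReal.tsum_mul_left]
    refine tsum_congr fun f => ?_
    simp [Fin.consEquiv, Fin.prod_univ_succ]

lemma tsum_list_prod_map : ∑' l : List α, (l.map w).prod = ∑' n : ℕ, (∑' a, w a) ^ n := by
  rw [← List.equivSigmaTuple.symm.tsum_eq, ENNReal.tsum_sigma']
  refine tsum_congr fun n => ?_
  rw [← tsum_fin_pi_prod w n]
  refine tsum_congr fun f => ?_
  simp [List.equivSigmaTuple, List.prod_ofFn]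

end ENNReal

noncomputable def stepWeight {X : Type*} [SeminormedAddCommGroup X] (c : ℝ) : X → ℝ≥0∞ :=
  ({0}ᶜ : Set X).indicator fun z => ENNReal.ofReal (exp (-c * ‖z‖))

lemma ofReal_exp_neg_mul_sum_norm {X : Type*} [SeminormedAddCommGroup X] (c : ℝ) :
    ∀ s : List X, (∀ z ∈ s, z ≠ 0) →
      ENNReal.ofReal (exp (-c * (s.map (‖·‖)).sum)) = (s.map (stepWeight c)).prod
  | [], _ => by simp
  | z :: s, hs => by
    rw [List.map_cons, List.sum_cons, mul_add, exp_add, ENNReal.ofReal_mul (exp_nonneg _),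
      ofReal_exp_neg_mul_sum_norm c s fun z hz => hs z (List.mem_cons_of_mem _ hz),
      List.map_cons, List.prod_cons, stepWeight,
      Set.indicator_of_mem (hs z List.mem_cons_self)]

lemma one_le_norm_of_ne_zero {d : ℕ} {z : Fin d → ℤ} (hz : z ≠ 0) : 1 ≤ ‖z‖ := by
  obtain ⟨i, hi⟩ := Function.ne_iff.mp hz
  calc (1 : ℝ) ≤ ‖z i‖ := by rw [Int.norm_eq_abs]; exact_mod_cast Int.one_le_abs hi
    _ ≤ ‖z‖ := norm_le_pi_norm z i

lemma stepWeight_le {d : ℕ} {c : ℝ} (hc : d ≤ c) (z : Fin d → ℤ) :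
    stepWeight c z ≤ ENNReal.ofReal (exp (-(c - d))) * ∏ i, ENNReal.ofReal (exp (-‖z i‖)) := by
  by_cases hz : z = 0
  · simp [stepWeight, hz]
  rw [stepWeight, Set.indicator_of_mem hz, ← ENNReal.ofReal_prod_of_nonneg fun _ _ => exp_nonneg _,
    ← ENNReal.ofReal_mul (exp_nonneg _), ← exp_sum, ← exp_add]
  refine ENNReal.ofReal_le_ofReal (exp_le_exp.mpr ?_)
  have h1 : 1 ≤ ‖z‖ := one_le_norm_of_ne_zero hz
  have h2 : ∑ i, ‖z i‖ ≤ d * ‖z‖ := by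
    simpa using Finset.sum_le_sum fun i (_ : i ∈ Finset.univ) => norm_le_pi_norm z i
  simp only [Finset.sum_neg_distrib]
  nlinarith

lemma tsum_ofReal_exp_neg_norm_int_ne_top : ∑' m : ℤ, ENNReal.ofReal (exp (-‖m‖)) ≠ ⊤ := by
  have hnat : Summable fun n : ℕ => exp (-‖(n : ℤ)‖) := by
    simpa [Int.norm_eq_abs] using summable_exp_neg_nat
  have hsum : Summable fun m : ℤ => exp (-‖m‖) :=
    summable_int_iff_summable_nat_and_neg.mpr ⟨hnat, by simpa only [norm_neg] using hnat⟩
  rw [← ENNReal.ofReal_tsum_of_nonneg (fun _ => (exp_pos _).le) hsum]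
  exact ENNReal.ofReal_ne_top

lemma tsum_stepWeight_le {d : ℕ} {c : ℝ} (hc : d ≤ c) :
    ∑' z : Fin d → ℤ, stepWeight c z ≤
      ENNReal.ofReal (exp (-(c - d))) * (∑' m : ℤ, ENNReal.ofReal (exp (-‖m‖))) ^ d := by
  rw [← ENNReal.tsum_fin_pi_prod, ← ENNReal.tsum_mul_left]
  exact ENNReal.tsum_le_tsum (stepWeight_le hc)

lemma exists_tsum_stepWeight_lt_one (d : ℕ) : ∃ c > 0, ∑' z : Fin d → ℤ, stepWeight c z < 1 := by
  obtain ⟨ℓ, hℓ, hL⟩ : ∃ ℓ : ℝ, 0 ≤ ℓ ∧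
      (∑' m : ℤ, ENNReal.ofReal (exp (-‖m‖))) ^ d = ENNReal.ofReal ℓ :=
    ⟨_, ENNReal.toReal_nonneg,
      (ENNReal.ofReal_toReal (ENNReal.pow_ne_top tsum_ofReal_exp_neg_norm_int_ne_top)).symm⟩
  -- `c = d + (ℓ + 1)` turns the bound of `tsum_stepWeight_le` into `ℓ e^{-(ℓ+1)} < 1`
  refine ⟨d + (ℓ + 1), by positivity, (tsum_stepWeight_le (by linarith)).trans_lt ?_⟩
  rw [hL, ← ENNReal.ofReal_mul (exp_nonneg _), ENNReal.ofReal_lt_one, add_sub_cancel_left,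
    exp_neg, inv_mul_lt_iff₀ (exp_pos _), mul_one]
  linarith [add_one_le_exp (ℓ + 1)]

lemma exists_isTree_treeEdgeSum_eq_mstLen {d : ℕ} {Y : Finset (Fin d → ℤ)} (hY : Y.Nonempty) :
    ∃ τ : SimpleGraph {m // m ∈ Y}, τ.IsTree ∧
      treeEdgeSum τ (fun m => (m : Fin d → ℤ)) = mstLen d Y := by
  have : Nonempty {m // m ∈ Y} := hY.to_subtype
  obtain ⟨τ, -, hτ⟩ := (connected_top (V := {m // m ∈ Y})).exists_isTree_le
  have hne : {ℓ : ℝ | ∃ τ : SimpleGraph {m // m ∈ Y}, τ.IsTree ∧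
      treeEdgeSum τ (fun m => (m : Fin d → ℤ)) = ℓ}.Nonempty := ⟨_, τ, hτ, rfl⟩
  exact hne.csInf_mem <| (Set.finite_range fun τ : SimpleGraph {m // m ∈ Y} =>
    treeEdgeSum τ (fun m => (m : Fin d → ℤ))).subset fun _ ⟨τ, _, hτ⟩ => ⟨τ, hτ⟩

lemma exists_steps_of_zero_mem {d : ℕ} {Y : Finset (Fin d → ℤ)} (h0 : 0 ∈ Y) :
    ∃ s : List (Fin d → ℤ), (∀ z ∈ s, z ≠ 0) ∧ (s.scanl (· + ·) 0).toFinset = Y ∧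
      (s.map (‖·‖)).sum ≤ 2 * mstLen d Y := by
  obtain ⟨τ, hτ, hτY⟩ := exists_isTree_treeEdgeSum_eq_mstLen ⟨0, h0⟩
  obtain ⟨w, hw_supp, hw_count⟩ :=
    hτ.connected.exists_walk_forall_mem_support_count_edges_le_two ⟨0, h0⟩
  refine ⟨w.displacements Subtype.val, w.displacements_ne_zero Subtype.val_injective, ?_, ?_⟩
  · refine (congrArg List.toFinset (w.scanl_add_displacements Subtype.val)).trans ?_
    ext x
    simp [hw_supp]
  · rw [w.sum_norm_displacements, ← hτY]
    exact w.sum_edgeDist_le_two_mul_treeEdgeSum _ hw_count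

lemma tsum_ofReal_exp_neg_mul_mstLen_le (d : ℕ) {c : ℝ} (hc : 0 ≤ c) :
    ∑' Y : {Y : Finset (Fin d → ℤ) // 0 ∈ Y}, ENNReal.ofReal (exp (-(2 * c) * mstLen d Y.1)) ≤
      ∑' n : ℕ, (∑' z : Fin d → ℤ, stepWeight c z) ^ n := by
  choose s hs0 hsY hs using fun Y : {Y : Finset (Fin d → ℤ) // 0 ∈ Y} =>
    exists_steps_of_zero_mem Y.2
  have hinj : Function.Injective s := fun Y Y' h => Subtype.ext ((hsY Y).symm.trans (h ▸ hsY Y'))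
  rw [← ENNReal.tsum_list_prod_map]
  calc _ ≤ ∑' Y, ((s Y).map (stepWeight c)).prod := ENNReal.tsum_le_tsum fun Y => by
        rw [← ofReal_exp_neg_mul_sum_norm c _ (hs0 Y)]
        exact ENNReal.ofReal_le_ofReal (exp_le_exp.mpr (by nlinarith [hs Y]))
    _ ≤ _ := ENNReal.tsum_comp_le_tsum_of_injective hinj _

lemma summable_exp_neg_mul_mstLen (d : ℕ) :
    ∃ a > 0, Summable fun Y : {Y : Finset (Fin d → ℤ) // 0 ∈ Y} => exp (-a * mstLen d Y.1) := by
  obtain ⟨c, hc, hK⟩ := exists_tsum_stepWeight_lt_one d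
  refine ⟨2 * c, by positivity, ?_⟩
  have hgeom : ∑' n : ℕ, (∑' z : Fin d → ℤ, stepWeight c z) ^ n ≠ ⊤ := by
    rw [ENNReal.tsum_geometric]
    exact ENNReal.inv_ne_top.mpr (tsub_pos_of_lt hK).ne'
  simpa [exp_nonneg] using
    ENNReal.summable_toReal (ne_top_of_le_ne_top hgeom (tsum_ofReal_exp_neg_mul_mstLen_le d hc.le))

theorem mst_polymer_sum_general (d : ℕ) :
    ∃ a : ℝ, 0 < a ∧ ∃ b : ℝ, 0 < b ∧
      Summable (fun Y : {Y : Finset (Fin d → ℤ) // (0 : Fin d → ℤ) ∈ Y} =>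
        Real.exp (-a * mstLen d Y.1)) ∧
      ∑' Y : {Y : Finset (Fin d → ℤ) // (0 : Fin d → ℤ) ∈ Y},
        Real.exp (-a * mstLen d Y.1) ≤ b := by
  obtain ⟨a, ha, hsum⟩ := summable_exp_neg_mul_mstLen d
  have hnonneg : 0 ≤ ∑' Y : {Y : Finset (Fin d → ℤ) // 0 ∈ Y}, exp (-a * mstLen d Y.1) :=
    tsum_nonneg fun _ => (exp_pos _).le
  exact ⟨a, ha, 1 + _, by linarith, hsum, by linarith⟩

/-- Summability of `exp(−a·mst(Y))` over all finite subsets `Y ⊆ ℤ^d`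
containing `0` (part (1) of Lemma E.2 of the paper): there are constants `a, b > 0`
depending only on `d` such that `Σ_{Y ∋ 0} exp(−a·mst(Y)) ≤ b`. -/
theorem mst_polymer_sum (d : ℕ) (hd : 1 ≤ d) :
    ∃ a : ℝ, 0 < a ∧ ∃ b : ℝ, 0 < b ∧
      Summable (fun Y : {Y : Finset (Fin d → ℤ) // (0 : Fin d → ℤ) ∈ Y} =>
        Real.exp (-a * mstLen d Y.1)) ∧
      ∑' Y : {Y : Finset (Fin d → ℤ) // (0 : Fin d → ℤ) ∈ Y},
        Real.exp (-a * mstLen d Y.1) ≤ b :=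
  mst_polymer_sum_general d
end
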